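/- Let φ : ℝ^d → ℝ be a nonnegative C¹ function and C_φ ≥ 0 a constant such that |∇φ(x)| ≤ C_φ φ(x) for all x. Then for every x, z ∈ ℝ^d and every 0 < p < ∞, |φ(x+z)^{1/p} − φ(x)^{1/p}| ≤ w_{p,φ}(|z|) φ(x)^{1/p}, where w_{p,φ}(r) = (C_φ/p) r (1 + (C_φ/p) r e^{C_φ r / p}). -/

import Mathlib

/-!
For `g t = φ (x + t • z)` the gradient bound gives `|g'| ≤ C_φ ‖z‖ g`, so Grönwall's inequality gives
`φ (x + z) ≤ e^{C_φ ‖z‖} φ x` and, running the segment backwards, `φ x ≤ e^{C_φ ‖z‖} φ (x + z)`.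
Taking `p`-th roots, `φ (x + z)^{1/p}` lies between `e^{-s} φ x^{1/p}` and `e^s φ x^{1/p}` with
`s = C_φ ‖z‖ / p`, and `e^s - 1 ≤ s e^s ≤ s (1 + s e^s)`.
-/

open Real

theorem norm_add_le_mul_exp_of_norm_fderiv_le {E F : Type*} [NormedAddCommGroup E]
    [NormedSpace ℝ E] [NormedAddCommGroup F] [NormedSpace ℝ F] {f : E → F} {C : ℝ}
    (hf : Differentiable ℝ f) (hbound : ∀ x, ‖fderiv ℝ f x‖ ≤ C * ‖f x‖) (x z : E) :
    ‖f (x + z)‖ ≤ ‖f x‖ * exp (C * ‖z‖) := by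
  set g : ℝ → F := fun t => f (x + t • z)
  have hg : ∀ t, HasDerivAt g (fderiv ℝ f (x + t • z) z) t := fun t => by
    simpa [Function.comp_def] using (hf _).hasFDerivAt.comp_hasDerivAt t
      (((hasDerivAt_id t).smul_const z).const_add x)
  have hg' : ∀ t, ‖fderiv ℝ f (x + t • z) z‖ ≤ C * ‖z‖ * ‖g t‖ + 0 := fun t =>
    calc ‖fderiv ℝ f (x + t • z) z‖ ≤ ‖fderiv ℝ f (x + t • z)‖ * ‖z‖ :=
          ContinuousLinearMap.le_opNorm _ _
      _ ≤ C * ‖g t‖ * ‖z‖ := by gcongr; exact hbound _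
      _ = C * ‖z‖ * ‖g t‖ + 0 := by ring
  have := norm_le_gronwallBound_of_norm_deriv_right_le (a := 0) (b := 1)
    (fun t _ => (hg t).continuousAt.continuousWithinAt) (fun t _ => (hg t).hasDerivWithinAt)
    (by simp [g] : ‖g 0‖ ≤ ‖f x‖) (fun t _ => hg' t) 1 (by simp)
  simpa [g, gronwallBound_ε0] using this

theorem rpow_le_rpow_mul_exp {u v c q : ℝ} (hu : 0 ≤ u) (hv : 0 ≤ v) (hq : 0 ≤ q)
    (h : v ≤ u * exp c) : v ^ q ≤ u ^ q * exp (c * q) :=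
  calc v ^ q ≤ (u * exp c) ^ q := rpow_le_rpow hv h hq
    _ = u ^ q * exp (c * q) := by rw [mul_rpow hu (exp_pos c).le, ← exp_mul]

theorem abs_sub_le_of_le_mul_exp {u v t : ℝ} (hu : 0 ≤ u) (hvu : v ≤ u * exp t)
    (huv : u ≤ v * exp t) : |v - u| ≤ (exp t - 1) * u := by
  have hlower : u * exp (-t) ≤ v := by
    rw [exp_neg, ← div_eq_mul_inv, div_le_iff₀ (exp_pos t)]; exact huv
  -- `1 - e^{-t} ≤ e^t - 1` is AM-GM for `e^t` and `e^{-t}`.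
  have hsym : 1 - exp (-t) ≤ exp t - 1 := by
    have hprod : exp t * exp (-t) = 1 := by rw [← exp_add, add_neg_cancel, exp_zero]
    nlinarith [sq_nonneg (exp t - 1), exp_pos t]
  rw [abs_le]
  constructor <;> nlinarith

theorem exp_sub_one_le_mul_exp (s : ℝ) : exp s - 1 ≤ s * exp s := by
  have h := mul_le_mul_of_nonneg_left (one_sub_le_exp_neg s) (exp_pos s).le
  rwa [← exp_add, add_neg_cancel, exp_zero, mul_sub, mul_one, sub_le_comm, mul_comm] at h

theorem exp_sub_one_le_mul_one_add {s : ℝ} (hs : 0 ≤ s) :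
    exp s - 1 ≤ s * (1 + s * exp s) :=
  calc exp s - 1 ≤ s * exp s := exp_sub_one_le_mul_exp s
    _ = s + s * (exp s - 1) := by ring
    _ ≤ s + s * (s * exp s) := by gcongr; exact exp_sub_one_le_mul_exp s
    _ = s * (1 + s * exp s) := by ring

/-- weighted-norm weight regularity estimate
`|φ(x+z)^{1/p} − φ(x)^{1/p}| ≤ w_{p,φ}(|z|) φ(x)^{1/p}`,
where `w_{p,φ}(r) = (C_φ/p) r (1 + (C_φ/p) r e^{C_φ r / p})`. -/
theorem stmt_0 {d : ℕ} (φ : EuclideanSpace ℝ (Fin d) → ℝ) (Cφ : ℝ) (hCφ : 0 ≤ Cφ)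
    (hφ0 : ∀ x, 0 ≤ φ x) (hφC1 : ContDiff ℝ 1 φ)
    (hgrad : ∀ x, ‖fderiv ℝ φ x‖ ≤ Cφ * φ x)
    (p : ℝ) (hp : 0 < p) (x z : EuclideanSpace ℝ (Fin d)) :
    |φ (x + z) ^ (1 / p) - φ x ^ (1 / p)| ≤
      (Cφ / p) * ‖z‖ * (1 + (Cφ / p) * ‖z‖ * Real.exp (Cφ * ‖z‖ / p)) * φ x ^ (1 / p) := by
  have hgrowth : ∀ y w, φ (y + w) ≤ φ y * exp (Cφ * ‖w‖) := fun y w => by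
    simpa only [norm_of_nonneg (hφ0 _)] using
      norm_add_le_mul_exp_of_norm_fderiv_le (hφC1.differentiable one_ne_zero)
        (fun y => by simpa only [norm_of_nonneg (hφ0 y)] using hgrad y) y w
  have hforward := hgrowth x z
  have hbackward : φ x ≤ φ (x + z) * exp (Cφ * ‖z‖) := by
    simpa using hgrowth (x + z) (-z)
  have hs : Cφ * ‖z‖ * (1 / p) = Cφ / p * ‖z‖ := by ring
  have hq : (0 : ℝ) ≤ 1 / p := by positivity
  calc |φ (x + z) ^ (1 / p) - φ x ^ (1 / p)|
      ≤ (exp (Cφ / p * ‖z‖) - 1) * φ x ^ (1 / p) := by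
        rw [← hs]
        exact abs_sub_le_of_le_mul_exp (rpow_nonneg (hφ0 x) _)
          (rpow_le_rpow_mul_exp (hφ0 x) (hφ0 _) hq hforward)
          (rpow_le_rpow_mul_exp (hφ0 _) (hφ0 x) hq hbackward)
    _ ≤ _ := by
        rw [show Cφ * ‖z‖ / p = Cφ / p * ‖z‖ by ring]
        gcongr
        · exact rpow_nonneg (hφ0 x) _
        · exact exp_sub_one_le_mul_one_add (by positivity)
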